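/- arXiv:2406.03446 — 4 statements merged into one kernel-verified Lean document; each statement's English description precedes it below -/
import Mathlib

section
/- Let (X,d) be a complete metric space, T: X → X a polynomial contraction with constant λ ∈ (0,1), degree k, and coefficient functions aᵢ. Suppose there exist j ∈ {1,…,k} and A_j > 0 with aⱼ(x,y) ≥ A_j for all x,y ∈ X. Then for any z₀ ∈ X, the Picard sequence zₙ = Tⁿz₀ is a Cauchy sequence in (X,d). -/
theorem stmt_1 {X : Type*} [MetricSpace X] [CompleteSpace X] (T : X → X)
    (l : ℝ) (hl : l ∈ Set.Ioo (0:ℝ) 1) (k : ℕ) (hk : 1 ≤ k)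
    (a : ℕ → X → X → ℝ) (ha : ∀ i x y, 0 ≤ a i x y)
    (hcontr : ∀ x y : X,
      ∑ i ∈ Finset.range (k+1), a i (T x) (T y) * dist (T x) (T y) ^ i ≤
        l * ∑ i ∈ Finset.range (k+1), a i x y * dist x y ^ i)
    (j : ℕ) (hj1 : 1 ≤ j) (hjk : j ≤ k) (A : ℝ) (hA : 0 < A)
    (haj : ∀ x y : X, A ≤ a j x y) (z₀ : X) :
    CauchySeq (fun n => T^[n] z₀) := by
  obtain ⟨hl0, hl1⟩ := hl
  set f : ℕ → X := fun n => T^[n] z₀ with hf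
  set S : ℕ → ℝ := fun n =>
    ∑ i ∈ Finset.range (k+1), a i (f n) (f (n+1)) * dist (f n) (f (n+1)) ^ i with hS
  have hfs : ∀ n, f (n+1) = T (f n) := fun n => Function.iterate_succ_apply' T n z₀
  have hSstep : ∀ n, S (n+1) ≤ l * S n := by
    intro n
    have h := hcontr (f n) (f (n+1))
    simp only [hS]
    simp only [hfs] at h ⊢
    exact h
  have hS0 : 0 ≤ S 0 :=
    Finset.sum_nonneg fun i _ => mul_nonneg (ha _ _ _) (pow_nonneg dist_nonneg _)
  have hSn : ∀ n, S n ≤ l ^ n * S 0 := by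
    intro n; induction n with
    | zero => simp
    | succ n ih =>
      calc S (n+1) ≤ l * S n := hSstep n
        _ ≤ l * (l ^ n * S 0) := mul_le_mul_of_nonneg_left ih hl0.le
        _ = l ^ (n+1) * S 0 := by ring
  have hterm : ∀ n, A * dist (f n) (f (n+1)) ^ j ≤ S n := by
    intro n
    have h1 : a j (f n) (f (n+1)) * dist (f n) (f (n+1)) ^ j ≤ S n :=
      Finset.single_le_sum
        (f := fun i => a i (f n) (f (n+1)) * dist (f n) (f (n+1)) ^ i)
        (fun i _ => mul_nonneg (ha _ _ _) (pow_nonneg dist_nonneg _))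
        (Finset.mem_range.mpr (Nat.lt_succ_of_le hjk))
    have h2 : A * dist (f n) (f (n+1)) ^ j ≤ a j (f n) (f (n+1)) * dist (f n) (f (n+1)) ^ j :=
      mul_le_mul_of_nonneg_right (haj _ _) (pow_nonneg dist_nonneg _)
    linarith
  have hjpos : (0:ℝ) < (j:ℝ) := by exact_mod_cast hj1
  set e : ℝ := 1 / (j:ℝ) with he
  have hepos : 0 < e := by positivity
  have hje : (j:ℝ) * e = 1 := by rw [he, mul_one_div, div_self (ne_of_gt hjpos)]
  set B : ℝ := S 0 / A with hB
  have hBnn : 0 ≤ B := div_nonneg hS0 hA.le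
  have hd : ∀ n, dist (f n) (f (n+1)) ^ j ≤ l ^ n * B := by
    intro n
    rw [hB, ← mul_div_assoc, le_div_iff₀ hA]
    calc dist (f n) (f (n+1)) ^ j * A = A * dist (f n) (f (n+1)) ^ j := by ring
      _ ≤ S n := hterm n
      _ ≤ l ^ n * S 0 := hSn n
  set r : ℝ := l ^ e with hr
  have hr1 : r < 1 := Real.rpow_lt_one hl0.le hl1 hepos
  apply cauchySeq_of_le_geometric r (B ^ e) hr1
  intro n
  have step : (dist (f n) (f (n+1)) ^ j) ^ e ≤ (l ^ n * B) ^ e :=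
    Real.rpow_le_rpow (pow_nonneg dist_nonneg _) (hd n) hepos.le
  have lhs : (dist (f n) (f (n+1)) ^ j) ^ e = dist (f n) (f (n+1)) := by
    rw [← Real.rpow_natCast (dist (f n) (f (n+1))) j, ← Real.rpow_mul dist_nonneg, hje,
      Real.rpow_one]
  have rhs : (l ^ n * B) ^ e = B ^ e * r ^ n := by
    rw [Real.mul_rpow (pow_nonneg hl0.le n) hBnn, hr,
      ← Real.rpow_natCast l n, ← Real.rpow_mul hl0.le, mul_comm (n:ℝ) e,
      Real.rpow_mul hl0.le, Real.rpow_natCast, mul_comm]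
  calc dist (f n) (f (n+1)) = (dist (f n) (f (n+1)) ^ j) ^ e := lhs.symm
    _ ≤ (l ^ n * B) ^ e := step
    _ = B ^ e * r ^ n := rhs
end

section
/- Let (X,d) be a metric space and T: X → X a polynomial contraction with constant λ ∈ (0,1), degree k, and coefficient functions aᵢ. If a₀ ≡ 0, there exist constants Bᵢ > 0 with aᵢ(x,y) ≤ Bᵢ for all x,y and all i ∈ {1,…,k}, and there exist j ∈ {1,…,k} and A_j > 0 with aⱼ(x,y) ≥ A_j for all x,y, then T is continuous. -/
theorem stmt_2 {X : Type*} [MetricSpace X] (T : X → X)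
    (l : ℝ) (hl : l ∈ Set.Ioo (0:ℝ) 1) (k : ℕ) (hk : 1 ≤ k)
    (a : ℕ → X → X → ℝ) (ha : ∀ i x y, 0 ≤ a i x y)
    (hcontr : ∀ x y : X,
      ∑ i ∈ Finset.range (k+1), a i (T x) (T y) * dist (T x) (T y) ^ i ≤
        l * ∑ i ∈ Finset.range (k+1), a i x y * dist x y ^ i)
    (ha0 : ∀ x y : X, a 0 x y = 0)
    (B : ℕ → ℝ) (hB : ∀ i, 1 ≤ i → i ≤ k → 0 < B i)
    (haB : ∀ i, 1 ≤ i → i ≤ k → ∀ x y : X, a i x y ≤ B i)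
    (j : ℕ) (hj1 : 1 ≤ j) (hjk : j ≤ k) (A : ℝ) (hA : 0 < A)
    (haj : ∀ x y : X, A ≤ a j x y) :
    Continuous T := by
  obtain ⟨hl0, hl1⟩ := hl
  rw [Metric.continuous_iff]
  intro x ε hε
  set S : ℝ := ∑ i ∈ Finset.Icc 1 k, B i with hSdef
  have hS0 : 0 < S := Finset.sum_pos
    (fun i hi => hB i (Finset.mem_Icc.mp hi).1 (Finset.mem_Icc.mp hi).2)
    ⟨1, Finset.mem_Icc.mpr ⟨le_refl 1, hk⟩⟩
  have hlS : 0 < l * S := mul_pos hl0 hS0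
  set m : ℝ := min ε 1 with hmdef
  have hm0 : 0 < m := lt_min hε one_pos
  set δ : ℝ := min 1 (A * m ^ j / (l * S)) with hδdef
  have hδ0 : 0 < δ := lt_min one_pos (div_pos (mul_pos hA (pow_pos hm0 j)) hlS)
  refine ⟨δ, hδ0, fun y hy => ?_⟩
  set d : ℝ := dist y x with hddef
  have hd0 : 0 ≤ d := dist_nonneg
  have hd1 : d ≤ 1 := le_of_lt (lt_of_lt_of_le hy (min_le_left _ _))
  -- upper bound on RHS sum
  have hsum_eq : ∑ i ∈ Finset.range (k+1), a i y x * d ^ i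
      = ∑ i ∈ Finset.Icc 1 k, a i y x * d ^ i := by
    refine (Finset.sum_subset ?_ ?_).symm
    · intro i hi
      rw [Finset.mem_Icc] at hi
      exact Finset.mem_range.mpr (Nat.lt_succ_of_le hi.2)
    · intro i hi hni
      rw [Finset.mem_range] at hi
      rw [Finset.mem_Icc] at hni
      have : i = 0 := by omega
      simp [this, ha0]
  have hsum_le : ∑ i ∈ Finset.range (k+1), a i y x * d ^ i ≤ S * d := by
    rw [hsum_eq, hSdef, Finset.sum_mul]
    refine Finset.sum_le_sum fun i hi => ?_
    rw [Finset.mem_Icc] at hi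
    have h1 : d ^ i ≤ d := by
      calc d ^ i ≤ d ^ 1 := pow_le_pow_of_le_one hd0 hd1 hi.1
      _ = d := pow_one d
    calc a i y x * d ^ i ≤ B i * d ^ i :=
          mul_le_mul_of_nonneg_right (haB i hi.1 hi.2 y x) (pow_nonneg hd0 i)
      _ ≤ B i * d := mul_le_mul_of_nonneg_left h1 (le_of_lt (hB i hi.1 hi.2))
  -- lower bound on LHS sum
  set D : ℝ := dist (T y) (T x) with hDdef
  have hD0 : 0 ≤ D := dist_nonneg
  have hlow : A * D ^ j ≤ ∑ i ∈ Finset.range (k+1), a i (T y) (T x) * D ^ i := by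
    have hjmem : j ∈ Finset.range (k+1) := Finset.mem_range.mpr (Nat.lt_succ_of_le hjk)
    calc A * D ^ j ≤ a j (T y) (T x) * D ^ j :=
          mul_le_mul_of_nonneg_right (haj _ _) (pow_nonneg hD0 j)
      _ ≤ _ := Finset.single_le_sum
          (fun i _ => mul_nonneg (ha i _ _) (pow_nonneg hD0 i)) hjmem
  have hkey : A * D ^ j < A * m ^ j := by
    calc A * D ^ j ≤ l * ∑ i ∈ Finset.range (k+1), a i y x * d ^ i :=
          le_trans hlow (hcontr y x)
      _ ≤ l * (S * d) := mul_le_mul_of_nonneg_left hsum_le (le_of_lt hl0)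
      _ = l * S * d := by ring
      _ < l * S * δ := by exact mul_lt_mul_of_pos_left hy hlS
      _ ≤ l * S * (A * m ^ j / (l * S)) :=
          mul_le_mul_of_nonneg_left (min_le_right _ _) (le_of_lt hlS)
      _ = A * m ^ j := by field_simp
  have hDj : D ^ j < m ^ j := lt_of_mul_lt_mul_left hkey (le_of_lt hA)
  have hDm : D < m := lt_of_pow_lt_pow_left₀ j (le_of_lt hm0) hDj
  exact lt_of_lt_of_le hDm (min_le_left _ _)
end

section
/- Let X = [a,b] ⊂ ℝ with a < b and the standard metric, and define T : X → X by Tx = a for a ≤ x < b and Tb = (a+b)/2. Then T is Picard-continuous but T is not continuous (it is discontinuous at b). -/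
open Filter Topology

theorem stmt_5 (a b : ℝ) (hab : a < b)
    (T : Set.Icc a b → Set.Icc a b)
    (hT1 : ∀ x : Set.Icc a b, (x : ℝ) < b → (T x : ℝ) = a)
    (hT2 : (T ⟨b, Set.mem_Icc.mpr ⟨hab.le, le_rfl⟩⟩ : ℝ) = (a + b) / 2) :
    (∀ z w : Set.Icc a b, Tendsto (fun n => T^[n] z) atTop (𝓝 w) →
      Tendsto (fun n => T (T^[n] z)) atTop (𝓝 (T w))) ∧ ¬ Continuous T := by
  have haB : a ∈ Set.Icc a b := Set.mem_Icc.mpr ⟨le_rfl, hab.le⟩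
  set A : Set.Icc a b := ⟨a, haB⟩ with hA
  have hmid : (a + b) / 2 < b := by linarith
  have hTx : ∀ x : Set.Icc a b, (T x : ℝ) < b := by
    intro x
    rcases lt_or_eq_of_le x.2.2 with h | h
    · rw [hT1 x h]; exact hab
    · have : x = ⟨b, Set.mem_Icc.mpr ⟨hab.le, le_rfl⟩⟩ := Subtype.ext h
      rw [this, hT2]; exact hmid
  have hTT : ∀ x : Set.Icc a b, T (T x) = A := by
    intro x
    exact Subtype.ext (hT1 _ (hTx x))
  have hTA : T A = A := Subtype.ext (hT1 A hab)
  constructor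
  · intro z w hw
    have hev : ∀ᶠ n in atTop, T^[n] z = A := by
      filter_upwards [Filter.eventually_ge_atTop 2] with n hn
      obtain ⟨m, rfl⟩ : ∃ m, n = m + 2 := ⟨n - 2, by omega⟩
      induction m with
      | zero => exact hTT z
      | succ k ih =>
        have : k + 1 + 2 = (k + 2) + 1 := by omega
        rw [this, Function.iterate_succ_apply', ih (by omega), hTA]
    have hwA : w = A := by
      have h1 : Tendsto (fun n => T^[n] z) atTop (𝓝 A) :=
        Tendsto.congr' (by filter_upwards [hev] with n h; exact h.symm)
          (tendsto_const_nhds : Tendsto _ atTop (𝓝 A))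
      exact tendsto_nhds_unique hw h1
    rw [hwA, hTA]
    refine Tendsto.congr' ?_ (tendsto_const_nhds : Tendsto _ atTop (𝓝 A))
    filter_upwards [hev] with n h
    rw [h, hTA]
  · intro hC
    set s : ℕ → Set.Icc a b := fun n =>
      ⟨b - (b - a) / (n + 1), by
        constructor
        · have h1 : (b - a) / (n + 1) ≤ b - a := by
            apply div_le_self (by linarith)
            exact le_add_of_nonneg_left (Nat.cast_nonneg n)
          linarith
        · have : 0 < (b - a) / (n + 1 : ℝ) := div_pos (by linarith) (by positivity)
          linarith⟩ with hs
    have hslt : ∀ n, ((s n : ℝ)) < b := by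
      intro n
      have : 0 < (b - a) / (n + 1 : ℝ) := div_pos (by linarith) (by positivity)
      show b - (b - a) / (n + 1) < b
      linarith
    have hTs : ∀ n, T (s n) = A := fun n => Subtype.ext (hT1 _ (hslt n))
    have hsb : Tendsto s atTop (𝓝 ⟨b, Set.mem_Icc.mpr ⟨hab.le, le_rfl⟩⟩) := by
      rw [tendsto_subtype_rng]
      have : Tendsto (fun n : ℕ => b - (b - a) / (n + 1)) atTop (𝓝 (b - 0)) := by
        apply Tendsto.const_sub
        apply Tendsto.div_atTop tendsto_const_nhds
        exact tendsto_atTop_add_const_right _ 1 tendsto_natCast_atTop_atTop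
      simpa using this
    have h1 : Tendsto (fun n => T (s n)) atTop (𝓝 (T ⟨b, Set.mem_Icc.mpr ⟨hab.le, le_rfl⟩⟩)) :=
      (hC.tendsto _).comp hsb
    have h2 : Tendsto (fun n => T (s n)) atTop (𝓝 A) := by
      refine Tendsto.congr' ?_ (tendsto_const_nhds : Tendsto _ atTop (𝓝 A))
      filter_upwards with n
      exact (hTs n).symm
    have := tendsto_nhds_unique h1 h2
    have : (T ⟨b, Set.mem_Icc.mpr ⟨hab.le, le_rfl⟩⟩ : ℝ) = a := congrArg Subtype.val this
    rw [hT2] at this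
    linarith
end

section
/- Let (X,d) be a metric space and T: X → X. Suppose there exist λ ∈ (0,1), k ≥ 1, and positive constants a₁,…,a_k and L₁,…,L_k such that ∑_{i=1}^k aᵢ d(Tx,Ty)^i ≤ λ ∑_{i=1}^k aᵢ[d(x,y)^i + Lᵢ d(y,Tx)^i] for all x,y ∈ X. Then T is Picard-continuous. -/
open Filter Topology

theorem stmt_9 {X : Type*} [MetricSpace X] (T : X → X)
    (l : ℝ) (hl : l ∈ Set.Ioo (0:ℝ) 1) (k : ℕ) (hk : 1 ≤ k)
    (a L : ℕ → ℝ) (ha : ∀ i, 1 ≤ i → i ≤ k → 0 < a i)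
    (hL : ∀ i, 1 ≤ i → i ≤ k → 0 < L i)
    (hcontr : ∀ x y : X,
      ∑ i ∈ Finset.Icc 1 k, a i * dist (T x) (T y) ^ i ≤
        l * ∑ i ∈ Finset.Icc 1 k, a i * (dist x y ^ i + L i * dist y (T x) ^ i)) :
    ∀ z w : X, Tendsto (fun n => T^[n] z) atTop (𝓝 w) →
      Tendsto (fun n => T (T^[n] z)) atTop (𝓝 (T w)) := by
  intro z w hz
  have ha1 : 0 < a 1 := ha 1 le_rfl hk
  have h1 : Tendsto (fun n => dist (T^[n] z) w) atTop (𝓝 0) :=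
    tendsto_iff_dist_tendsto_zero.mp hz
  have h2 : Tendsto (fun n => dist w (T (T^[n] z))) atTop (𝓝 0) := by
    have := h1.comp (tendsto_add_atTop_nat 1)
    simp only [Function.comp_def, Function.iterate_succ_apply'] at this
    simpa [dist_comm] using this
  set f : ℕ → ℝ := fun n => l * ∑ i ∈ Finset.Icc 1 k,
    a i * (dist (T^[n] z) w ^ i + L i * dist w (T (T^[n] z)) ^ i) with hf
  have hf0 : Tendsto f atTop (𝓝 0) := by
    have hcont : Continuous (fun p : ℝ × ℝ => l * ∑ i ∈ Finset.Icc 1 k,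
        a i * (p.1 ^ i + L i * p.2 ^ i)) := by continuity
    have hval : (l * ∑ i ∈ Finset.Icc 1 k, a i * ((0:ℝ) ^ i + L i * 0 ^ i)) = 0 := by
      rw [Finset.sum_eq_zero, mul_zero]
      intro i hi
      have hi1 : i ≠ 0 := by
        have := (Finset.mem_Icc.mp hi).1; omega
      simp [zero_pow hi1]
    have := (hcont.tendsto ((0:ℝ), (0:ℝ))).comp (h1.prodMk_nhds h2)
    rw [hval] at this
    exact this
  have hbound : ∀ n, dist (T (T^[n] z)) (T w) ≤ f n / a 1 := by
    intro n
    rw [le_div_iff₀ ha1]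
    have hsingle : a 1 * dist (T (T^[n] z)) (T w) ^ 1 ≤
        ∑ i ∈ Finset.Icc 1 k, a i * dist (T (T^[n] z)) (T w) ^ i := by
      apply Finset.single_le_sum (f := fun i => a i * dist (T (T^[n] z)) (T w) ^ i)
      · intro i hi
        have h := Finset.mem_Icc.mp hi
        exact mul_nonneg (ha i h.1 h.2).le (pow_nonneg dist_nonneg i)
      · exact Finset.mem_Icc.mpr ⟨le_rfl, hk⟩
    have hc := hcontr (T^[n] z) w
    calc dist (T (T^[n] z)) (T w) * a 1
        = a 1 * dist (T (T^[n] z)) (T w) ^ 1 := by ring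
      _ ≤ ∑ i ∈ Finset.Icc 1 k, a i * dist (T (T^[n] z)) (T w) ^ i := hsingle
      _ ≤ f n := hc
  have hdiv : Tendsto (fun n => f n / a 1) atTop (𝓝 0) := by
    simpa using hf0.div_const (a 1)
  have : Tendsto (fun n => dist (T (T^[n] z)) (T w)) atTop (𝓝 0) :=
    squeeze_zero (fun n => dist_nonneg) hbound hdiv
  exact tendsto_iff_dist_tendsto_zero.mpr this
end
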